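/- For any subset S ⊆ [n], the correlation of the parity character χ_S with the label y under the spurious distribution D_λ satisfies E_{(x,y)∼D_λ}[χ_S(x)·y] = f̂_c(S) + (2λ−1)·f̂_s(S), where f̂ denotes Fourier coefficients under the uniform measure. In particular this equals f̂_c(S) if S ⊆ [c], equals (2λ−1)·f̂_s(S) if S ⊆ [s], and equals 0 otherwise. -/

import Mathlib

open scoped Classical

noncomputable section

/-- Boolean vectors of length `m`. -/
abbrev BVec (m : ℕ) := Fin m → Bool

/-- The boolean hypercube split into core, spurious and noise blocks. -/
abbrev Cube (c s u : ℕ) := BVec c × BVec s × BVec u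

/-- Uniform probability mass on the hypercube. -/
def pUnif (c s u : ℕ) : Cube c s u → ℝ := fun _ => ((2 : ℝ) ^ (c + s + u))⁻¹

/-- `D_same`: uniform conditioned on the core and spurious features agreeing. -/
def pSame (c s u : ℕ) (fc : BVec c → ℝ) (fs : BVec s → ℝ) : Cube c s u → ℝ := fun x =>
  if fc x.1 = fs x.2.1 then
    pUnif c s u x / (∑ y : Cube c s u, if fc y.1 = fs y.2.1 then pUnif c s u y else 0)
  else 0

/-- `D_diff`: uniform conditioned on the core and spurious features disagreeing. -/
def pDiff (c s u : ℕ) (fc : BVec c → ℝ) (fs : BVec s → ℝ) : Cube c s u → ℝ := fun x =>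
  if fc x.1 ≠ fs x.2.1 then
    pUnif c s u x / (∑ y : Cube c s u, if fc y.1 ≠ fs y.2.1 then pUnif c s u y else 0)
  else 0

/-- `D_λ := λ·D_same + (1−λ)·D_diff`. -/
def pLam (c s u : ℕ) (fc : BVec c → ℝ) (fs : BVec s → ℝ) (lam : ℝ) : Cube c s u → ℝ :=
  fun x => lam * pSame c s u fc fs x + (1 - lam) * pDiff c s u fc fs x

/-- The real value of a boolean bit: `true ↦ 1`, `false ↦ -1`. -/
def bval (b : Bool) : ℝ := if b then 1 else -1

/-- Parity character on a block. -/
def chi {m : ℕ} (S : Finset (Fin m)) (v : BVec m) : ℝ := ∏ i ∈ S, bval (v i)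

/-- Parity character `χ_S` on the full cube, with `S` given by its three blocks. -/
def fullChi (c s u : ℕ) (Sc : Finset (Fin c)) (Ss : Finset (Fin s)) (Su : Finset (Fin u))
    (x : Cube c s u) : ℝ :=
  chi Sc x.1 * chi Ss x.2.1 * chi Su x.2.2

/-- Fourier coefficient of a function on the full cube, under the uniform measure. -/
def hatFull (c s u : ℕ) (g : Cube c s u → ℝ) (Sc : Finset (Fin c)) (Ss : Finset (Fin s))
    (Su : Finset (Fin u)) : ℝ :=
  ∑ x : Cube c s u, pUnif c s u x * g x * fullChi c s u Sc Ss Su x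

/-- Fourier coefficient of a block function under the uniform measure on its block. -/
def hatBlock {m : ℕ} (f : BVec m → ℝ) (S : Finset (Fin m)) : ℝ :=
  ((2 : ℝ) ^ m)⁻¹ * ∑ v : BVec m, f v * chi S v

/-!
Since `fc` and `fs` take values `±1`, the indicator of `fc = fs` is `(1 + fc·fs)/2`, and
`fc·fs` has uniform mean zero because `fc` is unbiased. Hence both conditioning events have
probability `1/2` and `D_λ` has density `1 + (2λ−1)·fc·fs` against the uniform measure.
Multiplying by `χ_S · fc` and using `fc² = 1` gives `f̂_c(S) + (2λ−1)·f̂_s(S)`. Finally, the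
Fourier coefficient of a function of one block factors over the blocks, and the uniform mean of
`χ_T` on a block vanishes unless `T = ∅`.
-/

open Finset

lemma sum_prod_mul_mul {α β γ R : Type*} [Fintype α] [Fintype β] [Fintype γ] [CommSemiring R]
    (F : α → R) (G : β → R) (H : γ → R) :
    ∑ x : α × β × γ, F x.1 * G x.2.1 * H x.2.2 = (∑ a, F a) * (∑ b, G b) * ∑ c, H c := by
  rw [mul_assoc, Fintype.sum_mul_sum G H, sum_mul]
  simp only [Fintype.sum_prod_type, mul_sum, mul_assoc]

lemma sum_chi {m : ℕ} (S : Finset (Fin m)) :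
    ∑ v : BVec m, chi S v = if S = ∅ then (2 : ℝ) ^ m else 0 := by
  have hprod : ∀ v : BVec m, chi S v = ∏ i, if i ∈ S then bval (v i) else 1 := fun v => by
    rw [chi, prod_ite_mem, univ_inter]
  simp_rw [hprod, ← Fintype.prod_sum (fun i b => if i ∈ S then bval b else 1)]
  have hbit : ∀ i : Fin m, (∑ b : Bool, if i ∈ S then bval b else 1) = if i ∈ S then 0 else 2 :=
    fun i => by by_cases h : i ∈ S <;> simp [h, bval]
  simp_rw [hbit]
  split_ifs with hS
  · simp [hS]
  · obtain ⟨i, hi⟩ := nonempty_iff_ne_empty.2 hS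
    exact prod_eq_zero (mem_univ i) (if_pos hi)

lemma hatBlock_one {m : ℕ} (S : Finset (Fin m)) :
    hatBlock (fun _ => (1 : ℝ)) S = if S = ∅ then 1 else 0 := by
  simp only [hatBlock, one_mul, sum_chi]
  split_ifs <;> simp

lemma hatBlock_empty_eq_zero {m : ℕ} {f : BVec m → ℝ} (hf : ∑ v, f v = 0) :
    hatBlock f ∅ = 0 := by
  simp [hatBlock, chi, hf]

section Fourier

variable {c s u : ℕ}

lemma hatFull_mul (F : BVec c → ℝ) (G : BVec s → ℝ) (H : BVec u → ℝ)
    (Sc : Finset (Fin c)) (Ss : Finset (Fin s)) (Su : Finset (Fin u)) :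
    hatFull c s u (fun x => F x.1 * G x.2.1 * H x.2.2) Sc Ss Su
      = hatBlock F Sc * hatBlock G Ss * hatBlock H Su := by
  have hfactor : ∀ x : Cube c s u,
      pUnif c s u x * (F x.1 * G x.2.1 * H x.2.2) * fullChi c s u Sc Ss Su x
        = ((2 : ℝ) ^ c)⁻¹ * ((2 : ℝ) ^ s)⁻¹ * ((2 : ℝ) ^ u)⁻¹
          * ((F x.1 * chi Sc x.1) * (G x.2.1 * chi Ss x.2.1) * (H x.2.2 * chi Su x.2.2)) := by
    intro x
    simp only [pUnif, fullChi, pow_add, mul_inv]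
    ring
  simp only [hatFull, hfactor]
  rw [← mul_sum, sum_prod_mul_mul (fun v => F v * chi Sc v) (fun v => G v * chi Ss v)
    (fun v => H v * chi Su v), hatBlock, hatBlock, hatBlock]
  ring

lemma hatFull_fst (f : BVec c → ℝ)
    (Sc : Finset (Fin c)) (Ss : Finset (Fin s)) (Su : Finset (Fin u)) :
    hatFull c s u (fun x => f x.1) Sc Ss Su = if Ss = ∅ ∧ Su = ∅ then hatBlock f Sc else 0 := by
  have h := hatFull_mul f (fun _ => 1) (fun _ => 1) Sc Ss Su
  simp only [mul_one, hatBlock_one] at h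
  rw [h]
  by_cases hs : Ss = ∅ <;> by_cases hu : Su = ∅ <;> simp [hs, hu]

lemma hatFull_snd (f : BVec s → ℝ)
    (Sc : Finset (Fin c)) (Ss : Finset (Fin s)) (Su : Finset (Fin u)) :
    hatFull c s u (fun x => f x.2.1) Sc Ss Su = if Sc = ∅ ∧ Su = ∅ then hatBlock f Ss else 0 := by
  have h := hatFull_mul (fun _ => 1) f (fun _ => 1) Sc Ss Su
  simp only [mul_one, one_mul, hatBlock_one] at h
  rw [h]
  by_cases hc : Sc = ∅ <;> by_cases hu : Su = ∅ <;> simp [hc, hu]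

lemma sum_pUnif_mul (g : Cube c s u → ℝ) :
    ∑ x, pUnif c s u x * g x = hatFull c s u g ∅ ∅ ∅ := by
  simp [hatFull, fullChi, chi]

lemma sum_pUnif : ∑ x : Cube c s u, pUnif c s u x = 1 := by
  have h := hatFull_mul (c := c) (s := s) (u := u) (fun _ => 1) (fun _ => 1) (fun _ => 1) ∅ ∅ ∅
  rw [← sum_pUnif_mul] at h
  simpa [hatBlock_one] using h

lemma sum_pUnif_mul_mul_eq_zero {fc : BVec c → ℝ} (hfc : ∑ v, fc v = 0) (fs : BVec s → ℝ) :
    ∑ x : Cube c s u, pUnif c s u x * (fc x.1 * fs x.2.1) = 0 := by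
  have h := hatFull_mul (u := u) fc fs (fun _ => 1) ∅ ∅ ∅
  rw [← sum_pUnif_mul, hatBlock_empty_eq_zero hfc] at h
  simpa using h

end Fourier

lemma ite_eq_of_pm_one (p : ℝ) {a b : ℝ} (ha : a = 1 ∨ a = -1) (hb : b = 1 ∨ b = -1) :
    (if a = b then p else 0) = p * (1 + a * b) / 2 := by
  rcases ha with rfl | rfl <;> rcases hb with rfl | rfl <;> norm_num

lemma ite_ne_of_pm_one (p : ℝ) {a b : ℝ} (ha : a = 1 ∨ a = -1) (hb : b = 1 ∨ b = -1) :
    (if a ≠ b then p else 0) = p * (1 - a * b) / 2 := by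
  rcases ha with rfl | rfl <;> rcases hb with rfl | rfl <;> norm_num

section Spurious

variable {c s u : ℕ} {fc : BVec c → ℝ} {fs : BVec s → ℝ}

lemma sum_ite_eq_pUnif_eq_half (hfc : ∀ v, fc v = 1 ∨ fc v = -1)
    (hfs : ∀ v, fs v = 1 ∨ fs v = -1) (hfc_unb : ∑ v, fc v = 0) :
    (∑ y : Cube c s u, if fc y.1 = fs y.2.1 then pUnif c s u y else 0) = 1 / 2 := by
  simp only [ite_eq_of_pm_one _ (hfc _) (hfs _), mul_one_add, add_div, sum_add_distrib,
    ← sum_div, sum_pUnif, sum_pUnif_mul_mul_eq_zero hfc_unb]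
  norm_num

lemma sum_ite_ne_pUnif_eq_half (hfc : ∀ v, fc v = 1 ∨ fc v = -1)
    (hfs : ∀ v, fs v = 1 ∨ fs v = -1) (hfc_unb : ∑ v, fc v = 0) :
    (∑ y : Cube c s u, if fc y.1 ≠ fs y.2.1 then pUnif c s u y else 0) = 1 / 2 := by
  simp only [ite_ne_of_pm_one _ (hfc _) (hfs _), mul_sub, mul_one, sub_div, sum_sub_distrib,
    ← sum_div, sum_pUnif, sum_pUnif_mul_mul_eq_zero hfc_unb]
  norm_num

lemma pLam_eq (hfc : ∀ v, fc v = 1 ∨ fc v = -1) (hfs : ∀ v, fs v = 1 ∨ fs v = -1)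
    (hfc_unb : ∑ v, fc v = 0) (lam : ℝ) (x : Cube c s u) :
    pLam c s u fc fs lam x = pUnif c s u x * (1 + (2 * lam - 1) * (fc x.1 * fs x.2.1)) := by
  rw [pLam, pSame, pDiff, sum_ite_eq_pUnif_eq_half hfc hfs hfc_unb,
    sum_ite_ne_pUnif_eq_half hfc hfs hfc_unb, ite_eq_of_pm_one _ (hfc _) (hfs _),
    ite_ne_of_pm_one _ (hfc _) (hfs _)]
  ring

lemma sum_pLam_mul_fullChi_mul (hfc : ∀ v, fc v = 1 ∨ fc v = -1)
    (hfs : ∀ v, fs v = 1 ∨ fs v = -1) (hfc_unb : ∑ v, fc v = 0) (lam : ℝ)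
    (Sc : Finset (Fin c)) (Ss : Finset (Fin s)) (Su : Finset (Fin u)) :
    ∑ x : Cube c s u, pLam c s u fc fs lam x * fullChi c s u Sc Ss Su x * fc x.1
      = hatFull c s u (fun x => fc x.1) Sc Ss Su
          + (2 * lam - 1) * hatFull c s u (fun x => fs x.2.1) Sc Ss Su := by
  have hsq : ∀ v, fc v * fc v = 1 := fun v => by rcases hfc v with h | h <;> rw [h] <;> norm_num
  have hterm : ∀ x : Cube c s u, pLam c s u fc fs lam x * fullChi c s u Sc Ss Su x * fc x.1
      = pUnif c s u x * fc x.1 * fullChi c s u Sc Ss Su x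
        + (2 * lam - 1) * (pUnif c s u x * fs x.2.1 * fullChi c s u Sc Ss Su x) := by
    intro x
    rw [pLam_eq hfc hfs hfc_unb]
    linear_combination (2 * lam - 1) * pUnif c s u x * fs x.2.1 * fullChi c s u Sc Ss Su x
      * hsq x.1
  rw [sum_congr rfl fun x _ => hterm x, sum_add_distrib, ← mul_sum]
  rfl

end Spurious

theorem chi_label_correlation_general (c s u : ℕ) (fc : BVec c → ℝ) (fs : BVec s → ℝ)
    (hfc : ∀ v, fc v = 1 ∨ fc v = -1) (hfs : ∀ v, fs v = 1 ∨ fs v = -1)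
    (hfc_unb : (∑ v : BVec c, fc v) = 0) (hfs_unb : (∑ v : BVec s, fs v) = 0)
    (lam : ℝ)
    (Sc : Finset (Fin c)) (Ss : Finset (Fin s)) (Su : Finset (Fin u)) :
    (∑ x : Cube c s u, pLam c s u fc fs lam x * fullChi c s u Sc Ss Su x * fc x.1)
        = hatFull c s u (fun x => fc x.1) Sc Ss Su
            + (2 * lam - 1) * hatFull c s u (fun x => fs x.2.1) Sc Ss Su ∧
    (Ss = ∅ ∧ Su = ∅ →
      (∑ x : Cube c s u, pLam c s u fc fs lam x * fullChi c s u Sc Ss Su x * fc x.1)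
        = hatBlock fc Sc) ∧
    (Sc = ∅ ∧ Su = ∅ →
      (∑ x : Cube c s u, pLam c s u fc fs lam x * fullChi c s u Sc Ss Su x * fc x.1)
        = (2 * lam - 1) * hatBlock fs Ss) ∧
    (¬(Ss = ∅ ∧ Su = ∅) → ¬(Sc = ∅ ∧ Su = ∅) →
      (∑ x : Cube c s u, pLam c s u fc fs lam x * fullChi c s u Sc Ss Su x * fc x.1) = 0) := by
  have hsplit := sum_pLam_mul_fullChi_mul hfc hfs hfc_unb lam Sc Ss Su
  refine ⟨hsplit, ?_, ?_, ?_⟩ <;> rw [hsplit, hatFull_fst, hatFull_snd]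
  · rintro ⟨rfl, rfl⟩
    simp [hatBlock_empty_eq_zero hfs_unb]
  · rintro ⟨rfl, rfl⟩
    simp [hatBlock_empty_eq_zero hfc_unb]
  · intro hcore hspur
    simp [hcore, hspur]

/-- `E_{(x,y)∼D_λ}[χ_S(x)·y] = f̂_c(S) + (2λ−1)·f̂_s(S)`; in particular it equals `f̂_c(S)`
when `S ⊆ [c]`, equals `(2λ−1)·f̂_s(S)` when `S ⊆ [s]`, and vanishes otherwise. -/
theorem chi_label_correlation (c s u : ℕ) (fc : BVec c → ℝ) (fs : BVec s → ℝ)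
    (hfc : ∀ v, fc v = 1 ∨ fc v = -1) (hfs : ∀ v, fs v = 1 ∨ fs v = -1)
    (hfc_unb : (∑ v : BVec c, fc v) = 0) (hfs_unb : (∑ v : BVec s, fs v) = 0)
    (hpos_same : 0 < ∑ y : Cube c s u, if fc y.1 = fs y.2.1 then pUnif c s u y else 0)
    (hpos_diff : 0 < ∑ y : Cube c s u, if fc y.1 ≠ fs y.2.1 then pUnif c s u y else 0)
    (lam : ℝ) (hlam₁ : 1 / 2 ≤ lam) (hlam₂ : lam ≤ 1)
    (Sc : Finset (Fin c)) (Ss : Finset (Fin s)) (Su : Finset (Fin u)) :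
    (∑ x : Cube c s u, pLam c s u fc fs lam x * fullChi c s u Sc Ss Su x * fc x.1)
        = hatFull c s u (fun x => fc x.1) Sc Ss Su
            + (2 * lam - 1) * hatFull c s u (fun x => fs x.2.1) Sc Ss Su ∧
    (Ss = ∅ ∧ Su = ∅ →
      (∑ x : Cube c s u, pLam c s u fc fs lam x * fullChi c s u Sc Ss Su x * fc x.1)
        = hatBlock fc Sc) ∧
    (Sc = ∅ ∧ Su = ∅ →
      (∑ x : Cube c s u, pLam c s u fc fs lam x * fullChi c s u Sc Ss Su x * fc x.1)
        = (2 * lam - 1) * hatBlock fs Ss) ∧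
    (¬(Ss = ∅ ∧ Su = ∅) → ¬(Sc = ∅ ∧ Su = ∅) →
      (∑ x : Cube c s u, pLam c s u fc fs lam x * fullChi c s u Sc Ss Su x * fc x.1) = 0) :=
  chi_label_correlation_general c s u fc fs hfc hfs hfc_unb hfs_unb lam Sc Ss Su
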